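/- arXiv:2011.06343 — 3 statements merged into one kernel-verified Lean document; each statement's English description precedes it below -/
import Mathlib

section
/- Let F₀, L₀, L₁ be positive reals and F₁ ≥ 0, and set D = 2π(F₀ + F₁) + L₀L₁. Suppose real numbers p, ⟨s⟩, ⟨χ̃⟩, ⟨L⟩ satisfy: ⟨χ̃⟩ = (2πF₀ + 2L₀L₁)/D, ⟨L⟩ = 2πF₀L₁/D, ⟨χ̃⟩ = 1 + (1 − p)·⟨s⟩/L₁, and ⟨L⟩ = p·L₁ + (1 − p)·⟨s⟩. Then p = (2π(F₀ + F₁) − L₀L₁)/D. -/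
theorem inclusion_probability_from_open_loop
    (F₀ L₀ L₁ F₁ : ℝ) (hF₀ : 0 < F₀) (hL₀ : 0 < L₀) (hL₁ : 0 < L₁) (hF₁ : 0 ≤ F₁)
    (D p smean chimean Lmean : ℝ)
    (hD : D = 2 * Real.pi * (F₀ + F₁) + L₀ * L₁)
    (hchi : chimean = (2 * Real.pi * F₀ + 2 * L₀ * L₁) / D)
    (hL : Lmean = 2 * Real.pi * F₀ * L₁ / D)
    (hchi' : chimean = 1 + (1 - p) * smean / L₁)
    (hs : Lmean = p * L₁ + (1 - p) * smean) :
    p = (2 * Real.pi * (F₀ + F₁) - L₀ * L₁) / D := by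
  have hDpos : 0 < D := by
    rw [hD]; positivity
  have h1 : (1 - p) * smean = (chimean - 1) * L₁ := by
    field_simp at hchi'
    linarith
  have h2 : Lmean = p * L₁ + (chimean - 1) * L₁ := by rw [hs, h1]
  rw [hchi, hL] at h2
  field_simp at h2 ⊢
  nlinarith [hL₁.ne', hDpos]
end

section
/- Let R, l > 0 and let u be a unit vector in the Euclidean plane (EuclideanSpace ℝ (Fin 2), ‖u‖ = 1). Then the Lebesgue measure of the set {x | ∃ t ∈ [0, l], x + t·u ∈ closedBall 0 R} of positions from which the segment of length l in direction u hits the disk of radius R equals πR² + 2Rl. -/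
/-!
A reflection of the plane taking `u` to the basis vector `e₁ = single 1 1` fixes the disk and
preserves Lebesgue measure, so we may take `u = e₁`. The hitting set is then the region between
two graphs: over the abscissa `a ∈ [-R, R]` its section is the interval
`[-√(R² - a²) - l, √(R² - a²)]` of length `l + 2√(R² - a²)`, and integrating over `a` gives
`2Rl + πR²`.
-/

open Metric MeasureTheory Set

section HittingSet

variable {E F : Type*} [AddCommGroup E] [Module ℝ E] [AddCommGroup F] [Module ℝ F]

def segmentHittingSet (K : Set E) (u : E) (l : ℝ) : Set E :=
  {x | ∃ t ∈ Icc 0 l, x + t • u ∈ K}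

theorem preimage_segmentHittingSet {G : Type*} [FunLike G E F] [LinearMapClass G ℝ E F]
    (f : G) (K : Set F) (v : E) (l : ℝ) :
    f ⁻¹' segmentHittingSet K (f v) l = segmentHittingSet (f ⁻¹' K) v l := by
  ext x
  simp [segmentHittingSet]

end HittingSet

theorem volume_segmentHittingSet_closedBall_eq {E : Type*} [NormedAddCommGroup E]
    [InnerProductSpace ℝ E] [FiniteDimensional ℝ E] [MeasurableSpace E] [BorelSpace E]
    {u v : E} (huv : ‖u‖ = ‖v‖) (R l : ℝ) :
    volume (segmentHittingSet (closedBall 0 R) u l) =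
      volume (segmentHittingSet (closedBall 0 R) v l) := by
  set ρ := (ℝ ∙ (v - u))ᗮ.reflection
  have hρ : ρ v = u := Submodule.reflection_sub huv.symm
  rw [← hρ, ← MeasurePreserving.measure_preimage_equiv (f := ρ.toMeasurableEquiv)
    ρ.measurePreserving]
  simp [preimage_segmentHittingSet]

theorem exists_add_mem_Icc_iff {a b c l : ℝ} (hl : 0 ≤ l) (hab : a ≤ b) :
    (∃ t ∈ Icc 0 l, c + t ∈ Icc a b) ↔ c ∈ Icc (a - l) b := by
  constructor
  · rintro ⟨t, ⟨ht0, htl⟩, hca, hcb⟩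
    constructor <;> linarith
  · rintro ⟨hc, hcb⟩
    refine ⟨min l (max 0 (a - c)), ⟨by positivity, min_le_left _ _⟩, ?_, ?_⟩
    all_goals grind

theorem sq_add_sq_le_sq_iff {a b R : ℝ} (hR : 0 ≤ R) :
    a ^ 2 + b ^ 2 ≤ R ^ 2 ↔ a ∈ Icc (-R) R ∧ b ∈ Icc (-√(R ^ 2 - a ^ 2)) √(R ^ 2 - a ^ 2) := by
  constructor
  · intro h
    have ha : a ^ 2 ≤ R ^ 2 := by nlinarith [sq_nonneg b]
    refine ⟨?_, (Real.sq_le (by linarith)).1 (by linarith)⟩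
    simpa [Real.sqrt_sq hR] using (Real.sq_le (sq_nonneg R)).1 ha
  · rintro ⟨⟨haR, hRa⟩, hb⟩
    have ha : a ^ 2 ≤ R ^ 2 := sq_le_sq' haR hRa
    have := (Real.sq_le (by linarith : 0 ≤ R ^ 2 - a ^ 2)).2 hb
    linarith

theorem integral_sqrt_sq_sub_sq {R : ℝ} (hR : 0 ≤ R) :
    ∫ x in -R..R, √(R ^ 2 - x ^ 2) = Real.pi * R ^ 2 / 2 := by
  rcases hR.eq_or_lt with rfl | hR
  · simp
  have hscale (x : ℝ) : √(R ^ 2 - (R * x) ^ 2) = R * √(1 - x ^ 2) := by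
    rw [show R ^ 2 - (R * x) ^ 2 = R ^ 2 * (1 - x ^ 2) by ring, Real.sqrt_mul (sq_nonneg R),
      Real.sqrt_sq hR.le]
  have hsubst := intervalIntegral.integral_comp_mul_left (fun x => √(R ^ 2 - x ^ 2)) hR.ne'
    (a := -1) (b := 1)
  simp only [hscale, intervalIntegral.integral_const_mul, integral_sqrt_one_sub_sq, mul_neg,
    mul_one, smul_eq_mul] at hsubst
  field_simp at hsubst ⊢
  linarith

theorem volume_region_between_cc_eq_lintegral {α : Type*} [MeasurableSpace α] {μ : Measure α}
    [SFinite μ] {f g : α → ℝ} {s : Set α}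
    (hf : Measurable f) (hg : Measurable g) (hs : MeasurableSet s) :
    μ.prod volume {p : α × ℝ | p.1 ∈ s ∧ p.2 ∈ Icc (f p.1) (g p.1)} =
      ∫⁻ y in s, ENNReal.ofReal (g y - f y) ∂μ := by
  rw [Measure.prod_apply (measurableSet_region_between_cc hf hg hs), ← lintegral_indicator hs]
  congr 1 with x
  by_cases hx : x ∈ s <;> simp [hx, preimage, Icc_def]

def EuclideanSpace.measurableEquivProd : EuclideanSpace ℝ (Fin 2) ≃ᵐ ℝ × ℝ :=
  (MeasurableEquiv.toLp 2 (Fin 2 → ℝ)).symm.trans MeasurableEquiv.finTwoArrow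

theorem EuclideanSpace.measurableEquivProd_apply (x : EuclideanSpace ℝ (Fin 2)) :
    measurableEquivProd x = (x 0, x 1) :=
  rfl

theorem EuclideanSpace.volume_preserving_measurableEquivProd :
    MeasurePreserving measurableEquivProd :=
  (volume_preserving_finTwoArrow ℝ).comp (PiLp.volume_preserving_ofLp (Fin 2))

theorem segmentHittingSet_closedBall_single_one {R l : ℝ} (hR : 0 ≤ R) (hl : 0 ≤ l) :
    segmentHittingSet (closedBall (0 : EuclideanSpace ℝ (Fin 2)) R)
        (EuclideanSpace.single 1 1) l =
      EuclideanSpace.measurableEquivProd ⁻¹'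
        {p | p.1 ∈ Icc (-R) R ∧ p.2 ∈ Icc (-√(R ^ 2 - p.1 ^ 2) - l) √(R ^ 2 - p.1 ^ 2)} := by
  ext x
  simp only [segmentHittingSet, EuclideanSpace.closedBall_zero_eq R hR, Fin.sum_univ_two,
    mem_ofPred_eq, mem_preimage, EuclideanSpace.measurableEquivProd_apply, PiLp.add_apply,
    PiLp.smul_apply, PiLp.single_apply, zero_ne_one, if_true, if_false, smul_eq_mul, mul_zero,
    mul_one, add_zero, sq_add_sq_le_sq_iff hR]
  rw [← exists_add_mem_Icc_iff hl (neg_le_self (Real.sqrt_nonneg _))]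
  exact ⟨fun ⟨t, ht, hx₀, hx₁⟩ => ⟨hx₀, t, ht, hx₁⟩,
    fun ⟨hx₀, t, ht, hx₁⟩ => ⟨t, ht, hx₀, hx₁⟩⟩

theorem volume_segmentHittingSet_closedBall_single_one {R l : ℝ} (hR : 0 ≤ R) (hl : 0 ≤ l) :
    volume (segmentHittingSet (closedBall (0 : EuclideanSpace ℝ (Fin 2)) R)
      (EuclideanSpace.single 1 1) l) = ENNReal.ofReal (Real.pi * R ^ 2 + 2 * R * l) := by
  rw [segmentHittingSet_closedBall_single_one hR hl,
    EuclideanSpace.volume_preserving_measurableEquivProd.measure_preimage_equiv,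
    Measure.volume_eq_prod,
    volume_region_between_cc_eq_lintegral (f := fun x => -√(R ^ 2 - x ^ 2) - l)
      (g := fun x => √(R ^ 2 - x ^ 2)) (by fun_prop) (by fun_prop) measurableSet_Icc]
  have hwidth (y : ℝ) :
      √(R ^ 2 - y ^ 2) - (-√(R ^ 2 - y ^ 2) - l) = l + 2 * √(R ^ 2 - y ^ 2) := by
    ring
  have hcont : Continuous fun y : ℝ => l + 2 * √(R ^ 2 - y ^ 2) := by fun_prop
  simp_rw [hwidth]
  rw [← ofReal_integral_eq_lintegral_ofReal hcont.integrableOn_Icc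
      (ae_of_all _ fun y => by positivity), integral_Icc_eq_integral_Ioc,
    ← intervalIntegral.integral_of_le (by linarith),
    intervalIntegral.integral_add intervalIntegrable_const
      (Continuous.intervalIntegrable (by fun_prop) _ _),
    intervalIntegral.integral_const, intervalIntegral.integral_const_mul,
    integral_sqrt_sq_sub_sq hR, smul_eq_mul]
  congr 1
  ring

theorem segment_hitting_measure_disk
    (R l : ℝ) (hR : 0 < R) (hl : 0 < l)
    (u : EuclideanSpace ℝ (Fin 2)) (hu : ‖u‖ = 1) :
    volume {x : EuclideanSpace ℝ (Fin 2) |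
        ∃ t ∈ Set.Icc (0 : ℝ) l, x + t • u ∈ closedBall (0 : EuclideanSpace ℝ (Fin 2)) R}
      = ENNReal.ofReal (Real.pi * R ^ 2 + 2 * R * l) :=
  (volume_segmentHittingSet_closedBall_eq (by simp [hu]) R l).trans
    (volume_segmentHittingSet_closedBall_single_one hR.le hl.le)
end

section
/- Let R, l > 0 and let u be a unit vector in the Euclidean plane (EuclideanSpace ℝ (Fin 2), ‖u‖ = 1). Let N = ∫ over x ∈ ℝ² of the one-dimensional Lebesgue measure of {t ∈ [0, l] : x + t·u ∈ closedBall 0 R}, and let D = the Lebesgue measure of {x | ∃ t ∈ [0, l], x + t·u ∈ closedBall 0 R}. Then N/D = (1/l + 2/(πR))⁻¹; that is, the mean length ⟨L⟩ traversed inside the disk by uniformly placed segments of length l satisfies 1/⟨L⟩ = 1/l + 1/⟨σ⟩ with mean chord ⟨σ⟩ = πR/2. -/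
open Metric MeasureTheory

/-! The numerator is computed by Tonelli: integrating first over the starting point, each instant
`t ∈ [0, l]` contributes the area of a translate of the disk, so `N = l · πR²`. For the
denominator, take orthonormal coordinates `(a, s)` with `u` along the `a`-axis. The line at
height `s` meets the disk in a chord `[-c, c]` (empty if `|s| > R`), and it meets the set of
starting points in `[-c - l, c]`: every nonempty chord is lengthened by exactly `l`. Integrating
over `s` gives `D = πR² + 2Rl`, and `N / D = (1/l + 2/(πR))⁻¹` is then arithmetic. -/

/-- The starting points `x` of the segments `[x, x + l • u]` that meet `K`. -/
def hittingSet {E : Type*} [AddCommGroup E] [Module ℝ E] (K : Set E) (u : E) (l : ℝ) : Set E :=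
  {x | ∃ t ∈ Set.Icc (0 : ℝ) l, x + t • u ∈ K}

section Fubini

variable {E : Type*} [NormedAddCommGroup E] [NormedSpace ℝ E] [MeasurableSpace E] [BorelSpace E]
  {μ : Measure E} [μ.IsAddRightInvariant] [SFinite μ] {ν : Measure ℝ} [SFinite ν]

theorem lintegral_measure_setOf_mem_and_add_smul_mem {I : Set ℝ} {K : Set E}
    (hI : MeasurableSet I) (hK : MeasurableSet K) (u : E) :
    ∫⁻ x, ν {t | t ∈ I ∧ x + t • u ∈ K} ∂μ = ν I * μ K := by
  set S : Set (E × ℝ) := {p | p.2 ∈ I ∧ p.1 + p.2 • u ∈ K}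
  have hS : MeasurableSet S :=
    (measurable_snd hI).inter
      (hK.preimage (by fun_prop : Continuous fun p : E × ℝ => p.1 + p.2 • u).measurable)
  have hslice (t : ℝ) : μ ((fun x => (x, t)) ⁻¹' S) = I.indicator (fun _ => μ K) t := by
    by_cases ht : t ∈ I
    · have : (fun x => (x, t)) ⁻¹' S = (· + t • u) ⁻¹' K := by ext; simp [S, ht]
      rw [Set.indicator_of_mem ht, this, measure_preimage_add_right]
    · simp [S, ht]
  calc ∫⁻ x, ν {t | t ∈ I ∧ x + t • u ∈ K} ∂μ
      = μ.prod ν S := (Measure.prod_apply hS).symm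
    _ = ∫⁻ t, I.indicator (fun _ => μ K) t ∂ν := by
      simp only [Measure.prod_apply_symm hS, hslice]
    _ = ν I * μ K := by rw [lintegral_indicator_const hI, mul_comm]

end Fubini

section HittingSet

variable {E F : Type*} [AddCommGroup E] [Module ℝ E] [AddCommGroup F] [Module ℝ F]

theorem preimage_hittingSet {f : F → E} {u : E} {v : F}
    (hf : ∀ x (t : ℝ), f (x + t • v) = f x + t • u) (K : Set E) (l : ℝ) :
    f ⁻¹' hittingSet K u l = hittingSet (f ⁻¹' K) v l := by
  ext x
  simp [hittingSet, hf]

@[simp]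
theorem hittingSet_empty (u : E) (l : ℝ) : hittingSet (∅ : Set E) u l = ∅ := by
  simp [hittingSet]

theorem hittingSet_eq_image (K : Set E) (u : E) (l : ℝ) :
    hittingSet K u l = (fun p : E × ℝ => p.1 - p.2 • u) '' (K ×ˢ Set.Icc 0 l) := by
  ext x
  constructor
  · rintro ⟨t, ht, hx⟩
    exact ⟨(x + t • u, t), ⟨hx, ht⟩, add_sub_cancel_right x _⟩
  · rintro ⟨⟨y, t⟩, ⟨hy, ht⟩, rfl⟩
    exact ⟨t, ht, by simpa using hy⟩

theorem IsCompact.hittingSet [TopologicalSpace E] [IsTopologicalAddGroup E] [ContinuousSMul ℝ E]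
    {K : Set E} (hK : IsCompact K) (u : E) (l : ℝ) : IsCompact (hittingSet K u l) := by
  rw [hittingSet_eq_image]
  exact (hK.prod isCompact_Icc).image (by fun_prop)

end HittingSet

theorem Real.hittingSet_Icc {a b l : ℝ} (hab : a ≤ b) (hl : 0 ≤ l) :
    hittingSet (Set.Icc a b) 1 l = Set.Icc (a - l) b := by
  ext x
  simp only [hittingSet, smul_eq_mul, mul_one, Set.mem_ofPred_eq, Set.mem_Icc]
  constructor
  · rintro ⟨t, ⟨ht0, htl⟩, hat, htb⟩
    constructor <;> linarith
  · rintro ⟨hx, hxb⟩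
    rcases le_total a x with hax | hxa
    · exact ⟨0, ⟨le_rfl, hl⟩, by linarith, by linarith⟩
    · exact ⟨a - x, ⟨by linarith, by linarith⟩, by linarith, by linarith⟩

theorem Real.volume_hittingSet_Icc {a b l : ℝ} (hab : a ≤ b) (hl : 0 ≤ l) :
    volume (hittingSet (Set.Icc a b) 1 l) = volume (Set.Icc a b) + ENNReal.ofReal l := by
  rw [Real.hittingSet_Icc hab hl, Real.volume_Icc, Real.volume_Icc,
    ← ENNReal.ofReal_add (by linarith) hl]
  ring_nf

theorem preimage_mk_setOf_sq_add_sq_le {R s : ℝ} (hs : s ∈ Set.Icc (-R) R) :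
    (fun a => (a, s)) ⁻¹' {p : ℝ × ℝ | p.1 ^ 2 + p.2 ^ 2 ≤ R ^ 2} =
      Set.Icc (-√(R ^ 2 - s ^ 2)) √(R ^ 2 - s ^ 2) := by
  have : s ^ 2 ≤ R ^ 2 := sq_le_sq' hs.1 hs.2
  ext a
  simp [← Real.sq_le (sub_nonneg.2 this), le_sub_iff_add_le]

theorem preimage_mk_setOf_sq_add_sq_le_of_notMem {R s : ℝ} (hR : 0 ≤ R)
    (hs : s ∉ Set.Icc (-R) R) :
    (fun a => (a, s)) ⁻¹' {p : ℝ × ℝ | p.1 ^ 2 + p.2 ^ 2 ≤ R ^ 2} = ∅ := by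
  have : R ^ 2 < s ^ 2 := by
    rw [sq_lt_sq, abs_of_nonneg hR]
    simp only [Set.mem_Icc, not_and_or, not_le] at hs
    rcases hs with hs | hs
    · rw [abs_of_neg (by linarith)]; linarith
    · rw [abs_of_pos (by linarith)]; linarith
  ext a
  simp only [Set.mem_preimage, Set.mem_ofPred_eq, Set.mem_empty_iff_false, iff_false, not_le]
  nlinarith [sq_nonneg a]

theorem isCompact_setOf_sq_add_sq_le (R : ℝ) :
    IsCompact {p : ℝ × ℝ | p.1 ^ 2 + p.2 ^ 2 ≤ R ^ 2} := by
  have hbox : {p : ℝ × ℝ | p.1 ^ 2 + p.2 ^ 2 ≤ R ^ 2} ⊆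
      Set.Icc (-|R|) |R| ×ˢ Set.Icc (-|R|) |R| := by
    intro p (hp : p.1 ^ 2 + p.2 ^ 2 ≤ R ^ 2)
    have h1 : p.1 ^ 2 ≤ R ^ 2 := by nlinarith [sq_nonneg p.2]
    have h2 : p.2 ^ 2 ≤ R ^ 2 := by nlinarith [sq_nonneg p.1]
    rw [sq_le_sq] at h1 h2
    exact ⟨abs_le.1 h1, abs_le.1 h2⟩
  exact (isCompact_Icc.prod isCompact_Icc).of_isClosed_subset
    (isClosed_le (by fun_prop) continuous_const) hbox

theorem volume_hittingSet_setOf_sq_add_sq_le {R l : ℝ} (hR : 0 ≤ R) (hl : 0 ≤ l) :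
    volume (hittingSet {p : ℝ × ℝ | p.1 ^ 2 + p.2 ^ 2 ≤ R ^ 2} (1, 0) l) =
      volume {p : ℝ × ℝ | p.1 ^ 2 + p.2 ^ 2 ≤ R ^ 2} +
        ENNReal.ofReal (2 * R) * ENNReal.ofReal l := by
  set P := {p : ℝ × ℝ | p.1 ^ 2 + p.2 ^ 2 ≤ R ^ 2}
  have hP : IsCompact P := isCompact_setOf_sq_add_sq_le R
  have hslice (s : ℝ) : volume ((fun a => (a, s)) ⁻¹' hittingSet P (1, 0) l) =
      volume ((fun a => (a, s)) ⁻¹' P) +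
        (Set.Icc (-R) R).indicator (fun _ => ENNReal.ofReal l) s := by
    rw [preimage_hittingSet (v := (1 : ℝ)) (fun a t => by simp)]
    by_cases hs : s ∈ Set.Icc (-R) R
    · rw [preimage_mk_setOf_sq_add_sq_le hs, Set.indicator_of_mem hs,
        Real.volume_hittingSet_Icc (neg_le_self (Real.sqrt_nonneg _)) hl]
    · simp [P, preimage_mk_setOf_sq_add_sq_le_of_notMem hR hs, hs]
  rw [Measure.volume_eq_prod, Measure.prod_apply_symm (hP.hittingSet _ _).measurableSet,
    Measure.prod_apply_symm hP.measurableSet]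
  simp_rw [hslice]
  rw [lintegral_add_right _ (measurable_const.indicator measurableSet_Icc),
    lintegral_indicator_const measurableSet_Icc, Real.volume_Icc]
  ring_nf

section InnerProductSpace

variable {E : Type*} [NormedAddCommGroup E] [InnerProductSpace ℝ E]

theorem exists_orthonormalBasis_apply_eq [FiniteDimensional ℝ E] {ι : Type*} [Fintype ι]
    (hE : Module.finrank ℝ E = Fintype.card ι) (i : ι) {u : E} (hu : ‖u‖ = 1) :
    ∃ b : OrthonormalBasis ι ℝ E, b i = u := by
  have hon : Orthonormal ℝ (({i} : Set ι).domRestrict fun _ => u) :=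
    ⟨fun _ => hu, fun j k hjk => absurd (Subtype.ext (j.2.trans k.2.symm)) hjk⟩
  obtain ⟨b, hb⟩ := hon.exists_orthonormalBasis_extension_of_card_eq hE
  exact ⟨b, hb i rfl⟩

theorem OrthonormalBasis.preimage_closedBall_fin_two (b : OrthonormalBasis (Fin 2) ℝ E) {R : ℝ}
    (hR : 0 ≤ R) : (fun p : ℝ × ℝ => p.1 • b 0 + p.2 • b 1) ⁻¹' closedBall 0 R =
      {p : ℝ × ℝ | p.1 ^ 2 + p.2 ^ 2 ≤ R ^ 2} := by
  ext p
  simp [← sq_le_sq₀ (norm_nonneg _) hR, norm_add_sq_real, norm_smul, inner_smul_left,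
    inner_smul_right, b.orthonormal.inner_eq_zero]

variable [FiniteDimensional ℝ E] [MeasurableSpace E] [BorelSpace E]

theorem OrthonormalBasis.measurePreserving_fin_two (b : OrthonormalBasis (Fin 2) ℝ E) :
    MeasurePreserving (fun p : ℝ × ℝ => p.1 • b 0 + p.2 • b 1) := by
  have h : (fun p : ℝ × ℝ => p.1 • b 0 + p.2 • b 1) =
      b.repr.symm ∘ WithLp.toLp 2 ∘ MeasurableEquiv.finTwoArrow.symm := by
    funext p
    simp [← b.sum_repr_symm, Fin.sum_univ_two]
  rw [h]
  exact b.measurePreserving_repr_symm.comp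
    ((PiLp.volume_preserving_toLp (Fin 2)).comp (volume_preserving_finTwoArrow ℝ).symm)

theorem volume_hittingSet_closedBall (hE : Module.finrank ℝ E = 2) {R l : ℝ} (hR : 0 ≤ R)
    (hl : 0 ≤ l) {u : E} (hu : ‖u‖ = 1) :
    volume (hittingSet (closedBall (0 : E) R) u l) =
      volume (closedBall (0 : E) R) + ENNReal.ofReal (2 * R) * ENNReal.ofReal l := by
  obtain ⟨b, rfl⟩ := exists_orthonormalBasis_apply_eq (hE.trans (Fintype.card_fin 2).symm) 0 hu
  have he := b.measurePreserving_fin_two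
  have hshift (p : ℝ × ℝ) (t : ℝ) :
      (p + t • (1, 0)).1 • b 0 + (p + t • (1, 0)).2 • b 1 =
        p.1 • b 0 + p.2 • b 1 + t • b 0 := by
    simp only [Prod.fst_add, Prod.snd_add, Prod.smul_mk, smul_eq_mul, mul_one, mul_zero,
      add_zero, add_smul]
    abel
  have hK := ((isCompact_closedBall (0 : E) R).hittingSet (b 0) l).measurableSet
  rw [← he.measure_preimage hK.nullMeasurableSet,
    ← he.measure_preimage measurableSet_closedBall.nullMeasurableSet, preimage_hittingSet hshift,
    b.preimage_closedBall_fin_two hR, volume_hittingSet_setOf_sq_add_sq_le hR hl]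

end InnerProductSpace

theorem cauchy_formula_segments_disk
    (R l : ℝ) (hR : 0 < R) (hl : 0 < l)
    (u : EuclideanSpace ℝ (Fin 2)) (hu : ‖u‖ = 1)
    (N D : ENNReal)
    (hN : N = ∫⁻ x : EuclideanSpace ℝ (Fin 2),
        volume {t : ℝ | t ∈ Set.Icc (0 : ℝ) l ∧
          x + t • u ∈ closedBall (0 : EuclideanSpace ℝ (Fin 2)) R})
    (hD : D = volume {x : EuclideanSpace ℝ (Fin 2) |
        ∃ t ∈ Set.Icc (0 : ℝ) l,
          x + t • u ∈ closedBall (0 : EuclideanSpace ℝ (Fin 2)) R}) :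
    N / D = ENNReal.ofReal ((1 / l + 2 / (Real.pi * R))⁻¹) := by
  have hdisk : volume (closedBall (0 : EuclideanSpace ℝ (Fin 2)) R) =
      ENNReal.ofReal (R ^ 2 * Real.pi) := by
    rw [EuclideanSpace.volume_closedBall_fin_two, ENNReal.ofReal_mul (by positivity),
      ENNReal.ofReal_pow hR.le]
  have hN' : N = ENNReal.ofReal (l * (R ^ 2 * Real.pi)) := by
    rw [hN, lintegral_measure_setOf_mem_and_add_smul_mem measurableSet_Icc
      measurableSet_closedBall, Real.volume_Icc, sub_zero, hdisk, ← ENNReal.ofReal_mul hl.le]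
  have hD' : D = ENNReal.ofReal (R ^ 2 * Real.pi + 2 * R * l) := by
    rw [hD, ← hittingSet, volume_hittingSet_closedBall finrank_euclideanSpace_fin hR.le hl.le hu,
      hdisk, ← ENNReal.ofReal_mul (by positivity), ← ENNReal.ofReal_add (by positivity)
      (by positivity)]
  rw [hN', hD', ← ENNReal.ofReal_div_of_pos (by positivity)]
  congr 1
  field_simp
end
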